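/- arXiv:1707.07701 — 3 statements merged into one kernel-verified Lean document; each statement's English description precedes it below -/
import Mathlib

section
/- Let a, b be real numbers with a + b < 1 such that a + b is not a negative odd integer and a - b is not an odd integer. Then Γ((1-a-b)/2)·Γ((a+b+1)/2)/(Γ((a+1-b)/2)·Γ((b+1-a)/2)) = cos(π(b-a)/2)/cos(π(a+b)/2); consequently the limit as x → 1⁻ of ₂F₁[a,b;(a+b+1)/2;x] equals cos(π(b-a)/2)/cos(π(a+b)/2). -/
open Real Set Filter
open Topology

/-- The Gauss hypergeometric function `₂F₁[a,b;c;x]` of real parameters `a, b, c`,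
defined by its power series `∑ (a)ₙ(b)ₙ/((c)ₙ n!) xⁿ`, where `(a)ₙ` is the
ascending Pochhammer symbol. -/
noncomputable def twoF1 (a b c x : ℝ) : ℝ :=
  ∑' n : ℕ, ((ascPochhammer ℝ n).eval a * (ascPochhammer ℝ n).eval b) /
    ((ascPochhammer ℝ n).eval c * (n.factorial : ℝ)) * x ^ n

namespace TwoF1Aux

variable {a b c : ℝ}

noncomputable def T (a b c : ℝ) (k : ℕ) : ℝ :=
  ((ascPochhammer ℝ k).eval a * (ascPochhammer ℝ k).eval b) /
    ((ascPochhammer ℝ k).eval c * (k.factorial : ℝ))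

lemma poch_eval_eq_prod (c : ℝ) (n : ℕ) :
    (ascPochhammer ℝ n).eval c = ∏ j ∈ Finset.range n, (c + j) := by
  induction n with
  | zero => simp
  | succ n ih => rw [ascPochhammer_succ_eval, ih, Finset.prod_range_succ]

lemma poch_ne_zero {c : ℝ} (hc : ∀ k : ℕ, c + (k : ℝ) ≠ 0) (n : ℕ) :
    (ascPochhammer ℝ n).eval c ≠ 0 := by
  rw [poch_eval_eq_prod]
  exact Finset.prod_ne_zero_iff.2 fun j _ => hc j

lemma poch_pos {c : ℝ} (hc : 0 < c) (n : ℕ) : 0 < (ascPochhammer ℝ n).eval c := by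
  rw [poch_eval_eq_prod]
  exact Finset.prod_pos fun j _ => by positivity

lemma T_zero (a b c : ℝ) : T a b c 0 = 1 := by simp [T]

lemma T_succ {a b c : ℝ} (hc : ∀ k : ℕ, c + (k : ℝ) ≠ 0) (k : ℕ) :
    T a b c (k + 1) = T a b c k * (((a + k) * (b + k)) / ((c + k) * ((k : ℝ) + 1))) := by
  have h1 : (ascPochhammer ℝ k).eval c ≠ 0 := poch_ne_zero hc k
  have h2 : (c + (k : ℝ)) ≠ 0 := hc k
  have h3 : ((k.factorial : ℝ)) ≠ 0 := Nat.cast_ne_zero.2 k.factorial_ne_zero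
  have h4 : ((k : ℝ) + 1) ≠ 0 := by positivity
  simp only [T, ascPochhammer_succ_eval, Nat.factorial_succ, Nat.cast_mul, Nat.cast_add,
    Nat.cast_one]
  field_simp

lemma workhorse (hc : ∀ k : ℕ, c + (k : ℝ) ≠ 0) (hlt : a + b < c) :
    Summable (T a b c) ∧ Tendsto (fun k : ℕ => (k : ℝ) * T a b c k) atTop (𝓝 0) := by
  set δ := c - a - b with hδdef
  have hδ : 0 < δ := by simp [hδdef]; linarith
  obtain ⟨K, hK⟩ := exists_nat_ge (max (max (|a| + 1) (|b| + 1))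
      (max (|c| + 1) ((2 * |a * b|) / δ + |c| + 1)))
  have hKa : |a| + 1 ≤ (K : ℝ) := le_trans (le_max_of_le_left (le_max_left _ _)) hK
  have hKb : |b| + 1 ≤ (K : ℝ) := le_trans (le_max_of_le_left (le_max_right _ _)) hK
  have hKc : |c| + 1 ≤ (K : ℝ) := le_trans (le_max_of_le_right (le_max_left _ _)) hK
  have hKd : (2 * |a * b|) / δ + |c| + 1 ≤ (K : ℝ) :=
    le_trans (le_max_of_le_right (le_max_right _ _)) hK
  set τ : ℕ → ℝ := fun k => |T a b c k| with hτdef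
  have hτ0 : ∀ k, 0 ≤ τ k := fun k => abs_nonneg _
  have hpos : ∀ k : ℕ, K ≤ k → 0 < (k : ℝ) + a ∧ 0 < (k : ℝ) + b ∧ 0 < (k : ℝ) + c := by
    intro k hk
    have hk' : (K : ℝ) ≤ (k : ℝ) := Nat.cast_le.2 hk
    have h1 := neg_abs_le a; have h2 := neg_abs_le b; have h3 := neg_abs_le c
    refine ⟨by linarith, by linarith, by linarith⟩
  have hrec : ∀ k : ℕ, K ≤ k →
      τ (k + 1) = τ k * ((((k : ℝ) + a) * ((k : ℝ) + b)) / (((k : ℝ) + c) * ((k : ℝ) + 1))) := by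
    intro k hk
    obtain ⟨ha1, hb1, hc1⟩ := hpos k hk
    have h4 : (0:ℝ) < (k : ℝ) + 1 := by positivity
    rw [hτdef]
    simp only [T_succ hc k]
    rw [abs_mul, abs_div, abs_mul, abs_mul]
    rw [abs_of_pos (by linarith : (0:ℝ) < a + k), abs_of_pos (by linarith : (0:ℝ) < b + k),
      abs_of_pos (by linarith : (0:ℝ) < c + k), abs_of_pos h4]
    ring_nf
  have hkey : ∀ k : ℕ, K ≤ k → (δ / 2) * τ k ≤ (k : ℝ) * τ k - ((k : ℝ) + 1) * τ (k + 1) := by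
    intro k hk
    obtain ⟨ha1, hb1, hc1⟩ := hpos k hk
    have hk' : (K : ℝ) ≤ (k : ℝ) := Nat.cast_le.2 hk
    have keq : (k : ℝ) * τ k - ((k : ℝ) + 1) * τ (k + 1)
        = τ k * ((δ * k - a * b) / ((k : ℝ) + c)) := by
      rw [hrec k hk]
      have h4 : ((k : ℝ) + 1) ≠ 0 := by positivity
      field_simp
      ring
    rw [keq]
    have hq : δ / 2 ≤ (δ * k - a * b) / ((k : ℝ) + c) := by
      rw [le_div_iff₀ hc1]
      have hk2 : 2 * |a * b| + δ * |c| + δ ≤ δ * (k : ℝ) := by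
        have h5 : (2 * |a * b|) / δ + |c| + 1 ≤ (k : ℝ) := le_trans hKd hk'
        have h6 := mul_le_mul_of_nonneg_left h5 hδ.le
        have h7 : δ * ((2 * |a * b|) / δ) = 2 * |a * b| := by field_simp
        nlinarith
      have h8 : δ * c ≤ δ * |c| := mul_le_mul_of_nonneg_left (le_abs_self c) hδ.le
      have h9 := le_abs_self (a * b)
      nlinarith
    calc δ / 2 * τ k = τ k * (δ / 2) := by ring
    _ ≤ τ k * ((δ * k - a * b) / ((k : ℝ) + c)) :=
        mul_le_mul_of_nonneg_left hq (hτ0 k)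
  -- telescoping sum bound
  have hv0 : ∀ k : ℕ, 0 ≤ (k : ℝ) * τ k := fun k => mul_nonneg (Nat.cast_nonneg k) (hτ0 k)
  have htel : ∀ m : ℕ, ∑ i ∈ Finset.range m, (δ / 2) * τ (K + i)
      ≤ (K : ℝ) * τ K - ((K + m : ℕ) : ℝ) * τ (K + m) := by
    intro m
    have := Finset.sum_range_sub' (f := fun i => ((K + i : ℕ) : ℝ) * τ (K + i)) m
    simp only [Nat.add_zero] at this
    rw [← this]
    apply Finset.sum_le_sum
    intro i _
    have h := hkey (K + i) (Nat.le_add_right _ _)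
    have e2 : K + (i + 1) = K + i + 1 := rfl
    rw [e2]
    push_cast at h ⊢
    linarith
  have hsum_shift : Summable (fun i => τ (K + i)) := by
    apply summable_of_sum_range_le (c := (2 / δ) * ((K : ℝ) * τ K)) (fun i => hτ0 _)
    intro m
    have h1 := htel m
    have h2 := hv0 (K + m)
    have h3 : (δ / 2) * ∑ i ∈ Finset.range m, τ (K + i) ≤ (K : ℝ) * τ K := by
      rw [Finset.mul_sum]; push_cast at h1 h2 ⊢; linarith
    have h4 : (0:ℝ) < δ / 2 := by positivity
    calc ∑ i ∈ Finset.range m, τ (K + i)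
        = (2 / δ) * ((δ / 2) * ∑ i ∈ Finset.range m, τ (K + i)) := by field_simp
      _ ≤ (2 / δ) * ((K : ℝ) * τ K) := by
          apply mul_le_mul_of_nonneg_left h3 (by positivity)
  have hτsum : Summable τ := by
    rw [← summable_nat_add_iff K]
    simpa [add_comm] using hsum_shift
  have hTsum : Summable (T a b c) := hτsum.of_abs
  -- the limit
  set w : ℕ → ℝ := fun i => ((K + i : ℕ) : ℝ) * τ (K + i) with hwdef
  have hwanti : Antitone w := by
    apply antitone_nat_of_succ_le
    intro i
    have h := hkey (K + i) (Nat.le_add_right _ _)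
    have h2 := mul_nonneg (le_of_lt (by positivity : (0:ℝ) < δ / 2)) (hτ0 (K + i))
    simp only [hwdef]
    have e2 : K + (i + 1) = K + i + 1 := rfl
    rw [e2]
    push_cast at h ⊢
    linarith
  have hbdd : BddBelow (Set.range w) := by
    refine ⟨0, ?_⟩
    rintro x ⟨i, rfl⟩
    exact hv0 _
  have hwlim : Tendsto w atTop (𝓝 (⨅ i, w i)) := tendsto_atTop_ciInf hwanti hbdd
  have hL0 : 0 ≤ ⨅ i, w i := le_ciInf fun i => hv0 _
  have hLe : (⨅ i, w i) = 0 := by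
    by_contra h
    have hL : 0 < ⨅ i, w i := lt_of_le_of_ne hL0 (Ne.symm h)
    set L := ⨅ i, w i
    have hKpos : 0 < (K : ℝ) := by have := abs_nonneg a; linarith
    have hle : ∀ i, L / ((K + i : ℕ) : ℝ) ≤ τ (K + i) := by
      intro i
      have h1 : L ≤ w i := ciInf_le hbdd i
      have h2 : (0:ℝ) < ((K + i : ℕ) : ℝ) := by push_cast; linarith [Nat.cast_nonneg (α := ℝ) i]
      rw [div_le_iff₀ h2]
      calc L ≤ w i := h1
      _ = τ (K + i) * ((K + i : ℕ) : ℝ) := by rw [hwdef]; ring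
    have hsum2 : Summable (fun i => L / ((K + i : ℕ) : ℝ)) := by
      apply hsum_shift.of_nonneg_of_le (fun i => ?_) hle
      have h2 : (0:ℝ) < ((K + i : ℕ) : ℝ) := by push_cast; linarith [Nat.cast_nonneg (α := ℝ) i]
      positivity
    have hsum3 : Summable (fun i => ((K + i : ℕ) : ℝ)⁻¹) := by
      have := hsum2.mul_left L⁻¹
      refine this.congr fun i => ?_
      field_simp
    have hsum4 : Summable (fun n : ℕ => (n : ℝ)⁻¹) := by
      rw [← summable_nat_add_iff K]
      simpa [add_comm] using hsum3
    exact Real.not_summable_natCast_inv hsum4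
  rw [hLe] at hwlim
  have hτlim : Tendsto (fun k : ℕ => (k : ℝ) * τ k) atTop (𝓝 0) := by
    rw [← tendsto_add_atTop_iff_nat K]
    simpa [hwdef, add_comm] using hwlim
  refine ⟨hTsum, squeeze_zero_norm (fun k => le_of_eq ?_) hτlim⟩
  rw [Real.norm_eq_abs, abs_mul, Nat.abs_cast]

lemma shift_ne (hc : ∀ k : ℕ, c + (k : ℝ) ≠ 0) (n : ℕ) :
    ∀ k : ℕ, (c + (n : ℝ)) + (k : ℝ) ≠ 0 := by
  intro k
  have := hc (n + k)
  push_cast at this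
  intro h; apply this; linarith

lemma poch_c1 (c : ℝ) (k : ℕ) :
    (ascPochhammer ℝ k).eval (c + 1) * c = (ascPochhammer ℝ k).eval c * (c + k) := by
  induction k with
  | zero => simp
  | succ k ih =>
    simp only [ascPochhammer_succ_eval] at *
    push_cast
    linear_combination (c + 1 + (k : ℝ)) * ih

lemma contiguous (hc : ∀ k : ℕ, c + (k : ℝ) ≠ 0) (hlt : a + b < c) :
    c * (c - a - b) * ∑' k, T a b c k
      = (c - a) * (c - b) * ∑' k, T a b (c + 1) k := by
  have hc1 : ∀ k : ℕ, (c + 1) + (k : ℝ) ≠ 0 := by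
    have := shift_ne hc 1; simpa using this
  obtain ⟨hsc, hlim⟩ := workhorse hc hlt
  obtain ⟨hsc1, -⟩ := workhorse (a := a) (b := b) hc1 (by linarith)
  have hc0 : c ≠ 0 := by have := hc 0; simpa using this
  have hTc1 : ∀ k : ℕ, T a b (c + 1) k = T a b c k * c / (c + k) := by
    intro k
    have h1 : (ascPochhammer ℝ k).eval c ≠ 0 := poch_ne_zero hc k
    have h2 : (ascPochhammer ℝ k).eval (c + 1) ≠ 0 := poch_ne_zero hc1 k
    have h3 := poch_c1 c k
    have hck := hc k
    have h4 : ((k.factorial : ℝ)) ≠ 0 := Nat.cast_ne_zero.2 k.factorial_ne_zero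
    simp only [T]
    rw [div_mul_eq_mul_div, div_div,
      div_eq_div_iff (mul_ne_zero h2 h4) (mul_ne_zero (mul_ne_zero h1 h4) hck)]
    linear_combination (-((ascPochhammer ℝ k).eval a * (ascPochhammer ℝ k).eval b
      * (k.factorial : ℝ))) * h3
  have hident : ∀ k : ℕ, c * (c - a - b) * T a b c k - (c - a) * (c - b) * T a b (c + 1) k
      = c * (k : ℝ) * T a b c k - c * ((k : ℝ) + 1) * T a b c (k + 1) := by
    intro k
    rw [hTc1 k, T_succ hc k]
    have hck := hc k
    have h4 : ((k : ℝ) + 1) ≠ 0 := by positivity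
    field_simp
    ring
  have hU : Tendsto (fun k : ℕ => c * (k : ℝ) * T a b c k) atTop (𝓝 0) := by
    have := hlim.const_mul c
    simp only [mul_zero] at this
    refine this.congr fun k => by ring
  have hsumU : Summable (fun k => c * (c - a - b) * T a b c k
      - (c - a) * (c - b) * T a b (c + 1) k) :=
    (hsc.mul_left _).sub (hsc1.mul_left _)
  have hhs : HasSum (fun k => c * (c - a - b) * T a b c k
      - (c - a) * (c - b) * T a b (c + 1) k) 0 := by
    rw [hsumU.hasSum_iff_tendsto_nat]
    have heq : ∀ n : ℕ, ∑ i ∈ Finset.range n,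
        (c * (c - a - b) * T a b c i - (c - a) * (c - b) * T a b (c + 1) i)
        = c * ((0 : ℕ) : ℝ) * T a b c 0 - c * (n : ℝ) * T a b c n := by
      intro n
      rw [Finset.sum_congr rfl (fun i _ => hident i)]
      have := Finset.sum_range_sub' (f := fun i : ℕ => c * (i : ℝ) * T a b c i) n
      rw [← this]
      apply Finset.sum_congr rfl
      intro i _
      push_cast
      ring_nf
    simp only [heq]
    simp only [Nat.cast_zero, mul_zero, zero_mul, zero_sub]
    simpa using hU.neg
  have htsum := hhs.tsum_eq
  rw [Summable.tsum_sub (hsc.mul_left _) (hsc1.mul_left _), tsum_mul_left, tsum_mul_left] at htsum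
  linarith

lemma iterate (hc : ∀ k : ℕ, c + (k : ℝ) ≠ 0) (hlt : a + b < c) (n : ℕ) :
    (∑' k, T a b c k) * ((ascPochhammer ℝ n).eval c * (ascPochhammer ℝ n).eval (c - a - b))
      = ((ascPochhammer ℝ n).eval (c - a) * (ascPochhammer ℝ n).eval (c - b))
        * ∑' k, T a b (c + (n : ℝ)) k := by
  induction n with
  | zero => simp
  | succ n ih =>
    have hcn := shift_ne hc n
    have hltn : a + b < c + (n : ℝ) := by
      have : (0:ℝ) ≤ (n : ℝ) := Nat.cast_nonneg n
      linarith
    have hcont := contiguous hcn hltn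
    have e : c + ((n + 1 : ℕ) : ℝ) = c + (n : ℝ) + 1 := by push_cast; ring
    rw [e]
    simp only [ascPochhammer_succ_eval]
    linear_combination ((c + (n : ℝ)) * (c + (n : ℝ) - a - b)) * ih
      + ((ascPochhammer ℝ n).eval (c - a) * (ascPochhammer ℝ n).eval (c - b)) * hcont

lemma gammaSeq_poch (s : ℝ) (n : ℕ) :
    Real.GammaSeq s n = (n : ℝ) ^ s * (n.factorial : ℝ) / (ascPochhammer ℝ (n + 1)).eval s := by
  rw [Real.GammaSeq, poch_eval_eq_prod]

lemma ratio_tendsto (hc : ∀ k : ℕ, c + (k : ℝ) ≠ 0) (hlt : a + b < c)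
    (hca : ∀ m : ℕ, c - a + (m : ℝ) ≠ 0) (hcb : ∀ m : ℕ, c - b + (m : ℝ) ≠ 0) :
    Tendsto (fun n : ℕ =>
        ((ascPochhammer ℝ (n + 1)).eval c * (ascPochhammer ℝ (n + 1)).eval (c - a - b)) /
          ((ascPochhammer ℝ (n + 1)).eval (c - a) * (ascPochhammer ℝ (n + 1)).eval (c - b)))
      atTop (𝓝 (Gamma (c - a) * Gamma (c - b) / (Gamma c * Gamma (c - a - b)))) := by
  have hδ : 0 < c - a - b := by linarith
  have hΓc : Gamma c ≠ 0 := Real.Gamma_ne_zero fun m => by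
    have := hc m; intro h; apply this; rw [h]; ring
  have hΓd : Gamma (c - a - b) ≠ 0 := (Real.Gamma_pos_of_pos hδ).ne'
  have hGS : Tendsto (fun n : ℕ => Real.GammaSeq (c - a) n * Real.GammaSeq (c - b) n /
      (Real.GammaSeq c n * Real.GammaSeq (c - a - b) n)) atTop
      (𝓝 (Gamma (c - a) * Gamma (c - b) / (Gamma c * Gamma (c - a - b)))) :=
    (((Real.GammaSeq_tendsto_Gamma (c - a)).mul (Real.GammaSeq_tendsto_Gamma (c - b))).div
      ((Real.GammaSeq_tendsto_Gamma c).mul (Real.GammaSeq_tendsto_Gamma (c - a - b)))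
      (mul_ne_zero hΓc hΓd))
  apply hGS.congr'
  filter_upwards [eventually_ge_atTop 1] with n hn
  have hn0 : (0 : ℝ) < (n : ℝ) := by exact_mod_cast hn
  have hP1 : (ascPochhammer ℝ (n + 1)).eval (c - a) ≠ 0 := poch_ne_zero hca _
  have hP2 : (ascPochhammer ℝ (n + 1)).eval (c - b) ≠ 0 := poch_ne_zero hcb _
  have hP3 : (ascPochhammer ℝ (n + 1)).eval c ≠ 0 := poch_ne_zero hc _
  have hP4 : (ascPochhammer ℝ (n + 1)).eval (c - a - b) ≠ 0 := (poch_pos hδ _).ne'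
  have hf : ((n.factorial : ℝ)) ≠ 0 := Nat.cast_ne_zero.2 n.factorial_ne_zero
  have hr1 : (0:ℝ) < (n : ℝ) ^ (c - a) := Real.rpow_pos_of_pos hn0 _
  have hr2 : (0:ℝ) < (n : ℝ) ^ (c - b) := Real.rpow_pos_of_pos hn0 _
  have hr3 : (0:ℝ) < (n : ℝ) ^ c := Real.rpow_pos_of_pos hn0 _
  have hr4 : (0:ℝ) < (n : ℝ) ^ (c - a - b) := Real.rpow_pos_of_pos hn0 _
  have hr : (n : ℝ) ^ c * (n : ℝ) ^ (c - a - b) = (n : ℝ) ^ (c - a) * (n : ℝ) ^ (c - b) := by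
    rw [← Real.rpow_add hn0, ← Real.rpow_add hn0]
    congr 1
    ring
  simp only [gammaSeq_poch]
  rw [div_mul_div_comm, div_mul_div_comm]
  have hN : (n:ℝ)^(c-a) * (n.factorial : ℝ) * ((n:ℝ)^(c-b) * (n.factorial : ℝ))
      = (n:ℝ)^c * (n.factorial : ℝ) * ((n:ℝ)^(c-a-b) * (n.factorial : ℝ)) := by
    linear_combination (-((n.factorial : ℝ)^2)) * hr
  have hN2 : (n:ℝ)^c * (n.factorial : ℝ) * ((n:ℝ)^(c-a-b) * (n.factorial : ℝ)) ≠ 0 := by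
    positivity
  rw [hN, div_div_div_comm, div_self hN2, one_div_div]


lemma tail_tendsto (hc : ∀ k : ℕ, c + (k : ℝ) ≠ 0) (hlt : a + b < c) :
    Tendsto (fun n : ℕ => ∑' k, T a b (c + (n : ℝ)) k) atTop (𝓝 1) := by
  obtain ⟨n₀, hn₀⟩ := exists_nat_ge (1 - c)
  have hcn₀ : (1:ℝ) ≤ c + (n₀ : ℝ) := by linarith
  have hsum₀ : Summable (T a b (c + (n₀ : ℝ))) :=
    (workhorse (shift_ne hc n₀) (by linarith [Nat.cast_nonneg (α := ℝ) n₀])).1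
  have key := tendsto_tsum_of_dominated_convergence (𝓕 := atTop)
      (f := fun (n : ℕ) (k : ℕ) => T a b (c + (n : ℝ)) k)
      (g := fun k : ℕ => if k = 0 then (1:ℝ) else 0)
      (bound := fun k => |T a b (c + (n₀ : ℝ)) k|) hsum₀.abs ?_ ?_
  · have : (∑' k : ℕ, if k = 0 then (1:ℝ) else 0) = 1 := tsum_ite_eq 0 (fun _ => (1:ℝ))
    rwa [this] at key
  · -- pointwise limits
    intro k
    rcases Nat.eq_zero_or_pos k with rfl | hk
    · simpa [T_zero] using tendsto_const_nhds
    · simp only [if_neg hk.ne']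
      have hden : Tendsto (fun n : ℕ => c + (n : ℝ)) atTop atTop :=
        tendsto_atTop_add_const_left _ c tendsto_natCast_atTop_atTop
      have hbnd : Tendsto (fun n : ℕ =>
          (|(ascPochhammer ℝ k).eval a * (ascPochhammer ℝ k).eval b| / (k.factorial : ℝ))
            / (c + (n : ℝ))) atTop (𝓝 0) :=
        Tendsto.div_atTop tendsto_const_nhds hden
      apply squeeze_zero_norm' ?_ hbnd
      filter_upwards [eventually_ge_atTop n₀] with n hn
      have h1 : (1:ℝ) ≤ c + (n : ℝ) := le_trans hcn₀ (by
        have : (n₀ : ℝ) ≤ (n : ℝ) := Nat.cast_le.2 hn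
        linarith)
      obtain ⟨m, rfl⟩ : ∃ m, k = m + 1 := ⟨k - 1, by omega⟩
      have hple : c + (n : ℝ) ≤ (ascPochhammer ℝ (m + 1)).eval (c + (n : ℝ)) := by
        rw [poch_eval_eq_prod, Finset.prod_range_succ']
        have hge1 : (1:ℝ) ≤ ∏ j ∈ Finset.range m, (c + (n:ℝ) + ((j : ℝ) + 1)) := by
          calc (1:ℝ) = ∏ _j ∈ Finset.range m, (1:ℝ) := by simp
          _ ≤ _ := Finset.prod_le_prod (fun j _ => zero_le_one) (fun j _ => by
              have : (0:ℝ) ≤ (j : ℝ) := Nat.cast_nonneg _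
              linarith)
        push_cast
        nlinarith [hge1]
      have hppos : (0:ℝ) < (ascPochhammer ℝ (m + 1)).eval (c + (n : ℝ)) :=
        lt_of_lt_of_le (by linarith) hple
      have hfpos : (0:ℝ) < (((m + 1).factorial : ℕ) : ℝ) := by positivity
      rw [Real.norm_eq_abs, T, abs_div, abs_mul (Polynomial.eval (c + (n:ℝ)) _),
        abs_of_pos hppos, abs_of_pos hfpos, div_div]
      have hle2 : ((m + 1).factorial : ℝ) * (c + (n:ℝ))
          ≤ (ascPochhammer ℝ (m + 1)).eval (c + (n:ℝ)) * ((m + 1).factorial : ℝ) := by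
        nlinarith
      exact div_le_div_of_nonneg_left (abs_nonneg _) (by positivity) hle2
  · -- domination
    filter_upwards [eventually_ge_atTop n₀] with n hn
    intro k
    have hnn : (n₀ : ℝ) ≤ (n : ℝ) := Nat.cast_le.2 hn
    have hp0 : ∀ j ∈ Finset.range k, (0:ℝ) < c + (n₀ : ℝ) + (j : ℝ) := by
      intro j _
      have : (0:ℝ) ≤ (j : ℝ) := Nat.cast_nonneg j
      linarith
    have hmono : (ascPochhammer ℝ k).eval (c + (n₀:ℝ)) ≤ (ascPochhammer ℝ k).eval (c + (n:ℝ)) := by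
      rw [poch_eval_eq_prod, poch_eval_eq_prod]
      apply Finset.prod_le_prod (fun j hj => (hp0 j hj).le)
      intro j _
      linarith
    have hp1 : (0:ℝ) < (ascPochhammer ℝ k).eval (c + (n₀:ℝ)) := by
      rw [poch_eval_eq_prod]; exact Finset.prod_pos hp0
    have hp2 : (0:ℝ) < (ascPochhammer ℝ k).eval (c + (n:ℝ)) := lt_of_lt_of_le hp1 hmono
    have hfpos : (0:ℝ) < (k.factorial : ℝ) := by positivity
    rw [Real.norm_eq_abs, T, T, abs_div, abs_div, abs_mul (Polynomial.eval (c + (n:ℝ)) _),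
      abs_mul (Polynomial.eval (c + (n₀:ℝ)) _), abs_of_pos hp1, abs_of_pos hp2,
      abs_of_pos hfpos]
    gcongr

lemma gauss (hc : ∀ k : ℕ, c + (k : ℝ) ≠ 0) (hlt : a + b < c)
    (hca : ∀ m : ℕ, c - a + (m : ℝ) ≠ 0) (hcb : ∀ m : ℕ, c - b + (m : ℝ) ≠ 0) :
    ∑' k, T a b c k = Gamma c * Gamma (c - a - b) / (Gamma (c - a) * Gamma (c - b)) := by
  have hδ : 0 < c - a - b := by linarith
  have hΓc : Gamma c ≠ 0 := Real.Gamma_ne_zero fun m => by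
    have := hc m; intro h; apply this; rw [h]; ring
  have hΓd : Gamma (c - a - b) ≠ 0 := (Real.Gamma_pos_of_pos hδ).ne'
  have hΓca : Gamma (c - a) ≠ 0 := Real.Gamma_ne_zero fun m => by
    have := hca m; intro h; apply this; rw [h]; ring
  have hΓcb : Gamma (c - b) ≠ 0 := Real.Gamma_ne_zero fun m => by
    have := hcb m; intro h; apply this; rw [h]; ring
  have heq : ∀ n : ℕ, (∑' k, T a b c k) *
      (((ascPochhammer ℝ (n + 1)).eval c * (ascPochhammer ℝ (n + 1)).eval (c - a - b)) /
        ((ascPochhammer ℝ (n + 1)).eval (c - a) * (ascPochhammer ℝ (n + 1)).eval (c - b)))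
      = ∑' k, T a b (c + ((n + 1 : ℕ) : ℝ)) k := by
    intro n
    have hiter := iterate hc hlt (n + 1)
    have hP1 : (ascPochhammer ℝ (n + 1)).eval (c - a) ≠ 0 := poch_ne_zero hca _
    have hP2 : (ascPochhammer ℝ (n + 1)).eval (c - b) ≠ 0 := poch_ne_zero hcb _
    rw [mul_div_assoc', div_eq_iff (mul_ne_zero hP1 hP2)]
    linear_combination hiter
  have h1 : Tendsto (fun n : ℕ => (∑' k, T a b c k) *
      (((ascPochhammer ℝ (n + 1)).eval c * (ascPochhammer ℝ (n + 1)).eval (c - a - b)) /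
        ((ascPochhammer ℝ (n + 1)).eval (c - a) * (ascPochhammer ℝ (n + 1)).eval (c - b))))
      atTop (𝓝 ((∑' k, T a b c k) *
        (Gamma (c - a) * Gamma (c - b) / (Gamma c * Gamma (c - a - b))))) :=
    (ratio_tendsto hc hlt hca hcb).const_mul _
  have h2 : Tendsto (fun n : ℕ => ∑' k, T a b (c + ((n + 1 : ℕ) : ℝ)) k) atTop (𝓝 1) :=
    (tail_tendsto hc hlt).comp (tendsto_add_atTop_nat 1)
  have h3 : (∑' k, T a b c k) * (Gamma (c - a) * Gamma (c - b) /
      (Gamma c * Gamma (c - a - b))) = 1 :=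
    tendsto_nhds_unique (by simpa only [heq] using h1) h2
  field_simp at h3 ⊢
  linarith


end TwoF1Aux

open TwoF1Aux in
/-- Euler's reflection identity for the Gamma quotient, and the left limit of
`₂F₁[a,b;(a+b+1)/2;x]` as `x → 1⁻`. -/
theorem twoF1_limit_at_one (a b : ℝ) (hab : a + b < 1)
    (habOdd : ∀ n : ℕ, a + b ≠ -(2 * (n : ℝ) + 1))
    (habDiff : ∀ n : ℤ, a - b ≠ 2 * (n : ℝ) + 1) :
    Gamma ((1 - a - b) / 2) * Gamma ((a + b + 1) / 2) /
        (Gamma ((a + 1 - b) / 2) * Gamma ((b + 1 - a) / 2)) =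
      Real.cos (π * (b - a) / 2) / Real.cos (π * (a + b) / 2) ∧
    Tendsto (fun x => twoF1 a b ((a + b + 1) / 2) x) (nhdsWithin 1 (Iio 1))
      (nhds (Real.cos (π * (b - a) / 2) / Real.cos (π * (a + b) / 2))) := by
  set c : ℝ := (a + b + 1) / 2 with hcdef
  have hc : ∀ k : ℕ, c + (k : ℝ) ≠ 0 := by
    intro k h
    apply habOdd k
    rw [hcdef] at h
    linarith
  have hlt : a + b < c := by rw [hcdef]; linarith
  have hca : ∀ m : ℕ, c - a + (m : ℝ) ≠ 0 := by
    intro m h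
    apply habDiff (m : ℤ)
    rw [hcdef] at h
    push_cast
    linarith
  have hcb : ∀ m : ℕ, c - b + (m : ℝ) ≠ 0 := by
    intro m h
    apply habDiff (-(m : ℤ) - 1)
    rw [hcdef] at h
    push_cast
    linarith
  have hcosA : Real.cos (π * (a + b) / 2) ≠ 0 := by
    intro h
    rw [Real.cos_eq_zero_iff] at h
    obtain ⟨n, hn⟩ := h
    have h2 : a + b = 2 * (n : ℝ) + 1 :=
      mul_left_cancel₀ Real.pi_ne_zero (by linear_combination 2 * hn)
    have hn0 : n + 1 ≤ 0 := by
      by_contra hcon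
      push_neg at hcon
      have : (0:ℝ) ≤ (n : ℝ) := by exact_mod_cast (by omega : (0:ℤ) ≤ n)
      linarith
    apply habOdd (-(n + 1)).toNat
    have htn : (((-(n + 1)).toNat : ℤ)) = -(n + 1) := Int.toNat_of_nonneg (by omega)
    have hm : (((-(n + 1)).toNat : ℕ) : ℝ) = -(n : ℝ) - 1 := by
      have := congrArg (fun z : ℤ => (z : ℝ)) htn
      push_cast at this
      linarith
    rw [h2, hm]
    ring
  have hcosB : Real.cos (π * (b - a) / 2) ≠ 0 := by
    intro h
    rw [Real.cos_eq_zero_iff] at h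
    obtain ⟨n, hn⟩ := h
    have h2 : b - a = 2 * (n : ℝ) + 1 :=
      mul_left_cancel₀ Real.pi_ne_zero (by linear_combination 2 * hn)
    apply habDiff (-n - 1)
    push_cast
    linarith
  have r1 : Gamma ((a + b + 1) / 2) * Gamma ((1 - a - b) / 2)
      = π / Real.cos (π * (a + b) / 2) := by
    have h := Real.Gamma_mul_Gamma_one_sub ((a + b + 1) / 2)
    rw [show (1 : ℝ) - (a + b + 1) / 2 = (1 - a - b) / 2 by ring] at h
    rw [h]
    congr 1
    rw [show π * ((a + b + 1) / 2) = π * (a + b) / 2 + π / 2 by ring,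
      Real.sin_add_pi_div_two]
  have r2 : Gamma ((a + 1 - b) / 2) * Gamma ((b + 1 - a) / 2)
      = π / Real.cos (π * (b - a) / 2) := by
    have h := Real.Gamma_mul_Gamma_one_sub ((a + 1 - b) / 2)
    rw [show (1 : ℝ) - (a + 1 - b) / 2 = (b + 1 - a) / 2 by ring] at h
    rw [h]
    congr 1
    rw [show π * ((a + 1 - b) / 2) = π / 2 - π * (b - a) / 2 by ring,
      Real.sin_pi_div_two_sub]
  have part1 : Gamma ((1 - a - b) / 2) * Gamma ((a + b + 1) / 2) /
      (Gamma ((a + 1 - b) / 2) * Gamma ((b + 1 - a) / 2))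
      = Real.cos (π * (b - a) / 2) / Real.cos (π * (a + b) / 2) := by
    rw [mul_comm (Gamma ((1 - a - b) / 2)), r1, r2]
    rw [div_div_div_comm]
    rw [div_self Real.pi_ne_zero]
    field_simp
  refine ⟨part1, ?_⟩
  have hGauss := gauss hc hlt hca hcb
  have hval : (∑' k, T a b c k)
      = Real.cos (π * (b - a) / 2) / Real.cos (π * (a + b) / 2) := by
    rw [hGauss, hcdef]
    rw [show (a + b + 1) / 2 - a - b = (1 - a - b) / 2 by ring,
      show (a + b + 1) / 2 - a = (b + 1 - a) / 2 by ring,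
      show (a + b + 1) / 2 - b = (a + 1 - b) / 2 by ring]
    rw [← part1]
    rw [mul_comm (Gamma ((a + b + 1) / 2)), mul_comm (Gamma ((b + 1 - a) / 2))]
  have hsummable := (workhorse hc hlt).1
  have htends : Tendsto (fun n => ∑ i ∈ Finset.range n, T a b c i) atTop
      (𝓝 (Real.cos (π * (b - a) / 2) / Real.cos (π * (a + b) / 2))) := by
    rw [← hval]
    exact hsummable.hasSum.tendsto_sum_nat
  have habel := Real.tendsto_tsum_powerSeries_nhdsWithin_lt htends
  exact habel
end

section
/- Let a ∈ {-2, -1, 0, 1, 2, 3} and let c be a real number with c > 4. With A = Γ(c/2)Γ((1+c)/2)/(Γ((c+a)/2)Γ((1+c-a)/2)), B = Γ(c)Γ(c-1)/(Γ(c-a)Γ(c+a-1)), and P_{q1}(x) = (2 - 4A + 2B)x² + (4A - B - 3)x + 1, one has ₂F₁[a,1-a;c;x] = P_{q1}(x) for every x ∈ [0,1); that is, the quadratic interpolation error vanishes identically for these parameter values. -/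
open Real Set Filter

lemma poch_neg (k m : ℕ) : (ascPochhammer ℝ (k + 1 + m)).eval (-(k:ℝ)) = 0 := by
  induction m with
  | zero => rw [ascPochhammer_succ_eval]; simp
  | succ n ih => rw [show k+1+(n+1) = (k+1+n)+1 from rfl, ascPochhammer_succ_eval, ih, zero_mul]

set_option maxHeartbeats 1000000 in
/-- For `a ∈ {-2,-1,0,1,2,3}` and `c > 4`, the quadratic interpolation `P_{q1}` of
`₂F₁[a,1-a;c;·]` is exact on `[0,1)`. -/
theorem quadratic_interpolation_exact (a c : ℝ)
    (ha : a ∈ ({-2, -1, 0, 1, 2, 3} : Set ℝ)) (hc : c > 4) (A B : ℝ)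
    (hA : A = Gamma (c / 2) * Gamma ((1 + c) / 2) /
      (Gamma ((c + a) / 2) * Gamma ((1 + c - a) / 2)))
    (hB : B = Gamma c * Gamma (c - 1) / (Gamma (c - a) * Gamma (c + a - 1)))
    (P : ℝ → ℝ) (hP : P = fun x => (2 - 4 * A + 2 * B) * x ^ 2 + (4 * A - B - 3) * x + 1) :
    ∀ x ∈ Ico (0 : ℝ) 1, twoF1 a (1 - a) c x = P x := by
  have hc0 : c ≠ 0 := by linarith
  have hc1 : c + 1 ≠ 0 := by linarith
  have hΓ1 : 0 < Gamma ((c-2)/2) := Gamma_pos_of_pos (by linarith)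
  have hΓ1' : 0 < Gamma ((c-1)/2) := Gamma_pos_of_pos (by linarith)
  have hΓ1'' : 0 < Gamma (c/2) := Gamma_pos_of_pos (by linarith)
  have hΓ2 : 0 < Gamma ((1+c)/2) := Gamma_pos_of_pos (by linarith)
  have hΓ3 : 0 < Gamma c := Gamma_pos_of_pos (by linarith)
  have hΓ4 : 0 < Gamma (c-3) := Gamma_pos_of_pos (by linarith)
  have hΓ5 : 0 < Gamma (c-2) := Gamma_pos_of_pos (by linarith)
  have hΓ6 : 0 < Gamma (c-1) := Gamma_pos_of_pos (by linarith)
  simp only [mem_insert_iff, mem_singleton_iff] at ha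
  rcases ha with rfl|rfl|rfl|rfl|rfl|rfl <;> intro x _
  · -- a = -2
    have hA' : A = (c-2)/(c+1) := by
      rw [hA, show (c + -2)/2 = (c-2)/2 by ring, show (1+c - -2)/2 = (1+c)/2 + 1 by ring,
        show c/2 = (c-2)/2 + 1 by ring, Gamma_add_one (ne_of_gt (by linarith)),
        Gamma_add_one (ne_of_gt (by linarith))]
      field_simp
      ring
    have hB' : B = (c-2)*(c-3)/((c+1)*c) := by
      rw [hB, show c - -2 = (c+1) + 1 by ring, Gamma_add_one (ne_of_gt (by linarith)),
        Gamma_add_one (ne_of_gt (by linarith)), show c - 1 = (c-2) + 1 by ring,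
        Gamma_add_one (ne_of_gt (by linarith)), show c - 2 = (c-3) + 1 by ring,
        Gamma_add_one (ne_of_gt (by linarith)), show c + -2 - 1 = c - 3 by ring]
      field_simp
    rw [twoF1, tsum_eq_sum (s := Finset.range 3) ?_]
    · simp [Finset.sum_range_succ, ascPochhammer_succ_eval, hP, hA', hB']
      field_simp
      ring
    · intro n hn
      obtain ⟨m, rfl⟩ := Nat.exists_eq_add_of_le (show 3 ≤ n by simpa using hn)
      rw [show 3 + m = 2 + 1 + m by omega, show (-2:ℝ) = -((2:ℕ):ℝ) by norm_num, poch_neg]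
      simp
  · -- a = -1
    have hA' : A = (c-1)/c := by
      rw [hA, show (c + -1)/2 = (c-1)/2 by ring, show (1+c - -1)/2 = c/2 + 1 by ring,
        Gamma_add_one (ne_of_gt (by linarith)), show (1+c)/2 = (c-1)/2 + 1 by ring,
        Gamma_add_one (ne_of_gt (by linarith))]
      field_simp
    have hB' : B = (c-2)/c := by
      rw [hB, show c - -1 = c + 1 by ring, Gamma_add_one (ne_of_gt (by linarith)),
        show c - 1 = (c-2) + 1 by ring, Gamma_add_one (ne_of_gt (by linarith)),
        show c + -1 - 1 = c - 2 by ring]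
      field_simp
    rw [twoF1, tsum_eq_sum (s := Finset.range 3) ?_]
    · simp [Finset.sum_range_succ, ascPochhammer_succ_eval, hP, hA', hB']
      field_simp
      ring
    · intro n hn
      obtain ⟨m, rfl⟩ := Nat.exists_eq_add_of_le (show 3 ≤ n by simpa using hn)
      rw [show 3 + m = 1 + 1 + (1 + m) by omega, show (-1:ℝ) = -((1:ℕ):ℝ) by norm_num, poch_neg]
      simp
  · -- a = 0
    have hA' : A = 1 := by
      rw [hA, show (c + 0)/2 = c/2 by ring, show (1+c - 0)/2 = (1+c)/2 by ring]
      field_simp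
    have hB' : B = 1 := by
      rw [hB, show c - 0 = c by ring, show c + 0 - 1 = c - 1 by ring]
      field_simp
    rw [twoF1, tsum_eq_sum (s := Finset.range 3) ?_]
    · simp [Finset.sum_range_succ, ascPochhammer_succ_eval, hP, hA', hB']
      ring
    · intro n hn
      obtain ⟨m, rfl⟩ := Nat.exists_eq_add_of_le (show 3 ≤ n by simpa using hn)
      rw [show 3 + m = 0 + 1 + (2 + m) by omega, show (0:ℝ) = -((0:ℕ):ℝ) by norm_num, poch_neg]
      simp
  · -- a = 1
    have hA' : A = 1 := by
      rw [hA, show (c + 1)/2 = (1+c)/2 by ring, show (1 + c - 1)/2 = c/2 by ring]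
      field_simp
    have hB' : B = 1 := by
      rw [hB, show c + 1 - 1 = c by ring]
      field_simp
    rw [twoF1, tsum_eq_sum (s := Finset.range 3) ?_]
    · simp [Finset.sum_range_succ, ascPochhammer_succ_eval, hP, hA', hB']
      ring
    · intro n hn
      obtain ⟨m, rfl⟩ := Nat.exists_eq_add_of_le (show 3 ≤ n by simpa using hn)
      rw [show 3 + m = 0 + 1 + (2 + m) by omega, show (1:ℝ) - 1 = -((0:ℕ):ℝ) by norm_num,
        poch_neg]
      simp
  · -- a = 2
    have hA' : A = (c-1)/c := by
      rw [hA, show (c + 2)/2 = c/2 + 1 by ring, show (1 + c - 2)/2 = (c-1)/2 by ring,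
        Gamma_add_one (ne_of_gt (by linarith)), show (1+c)/2 = (c-1)/2 + 1 by ring,
        Gamma_add_one (ne_of_gt (by linarith))]
      field_simp
    have hB' : B = (c-2)/c := by
      rw [hB, show c + 2 - 1 = c + 1 by ring, Gamma_add_one (ne_of_gt (by linarith)),
        show c - 1 = (c-2) + 1 by ring, Gamma_add_one (ne_of_gt (by linarith))]
      field_simp
    rw [twoF1, tsum_eq_sum (s := Finset.range 3) ?_]
    · simp [Finset.sum_range_succ, ascPochhammer_succ_eval, hP, hA', hB']
      field_simp
      ring
    · intro n hn
      obtain ⟨m, rfl⟩ := Nat.exists_eq_add_of_le (show 3 ≤ n by simpa using hn)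
      rw [show 3 + m = 1 + 1 + (1 + m) by omega, show (1:ℝ) - 2 = -((1:ℕ):ℝ) by norm_num,
        poch_neg]
      simp
  · -- a = 3
    have hA' : A = (c-2)/(c+1) := by
      rw [hA, show (c + 3)/2 = (1+c)/2 + 1 by ring, show (1 + c - 3)/2 = (c-2)/2 by ring,
        Gamma_add_one (ne_of_gt (by linarith)), show c/2 = (c-2)/2 + 1 by ring,
        Gamma_add_one (ne_of_gt (by linarith))]
      field_simp
      ring
    have hB' : B = (c-2)*(c-3)/((c+1)*c) := by
      rw [hB, show c + 3 - 1 = (c+1) + 1 by ring, Gamma_add_one (ne_of_gt (by linarith)),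
        Gamma_add_one (ne_of_gt (by linarith)), show c - 1 = (c-2) + 1 by ring,
        Gamma_add_one (ne_of_gt (by linarith)), show c - 2 = (c-3) + 1 by ring,
        Gamma_add_one (ne_of_gt (by linarith))]
      field_simp
    rw [twoF1, tsum_eq_sum (s := Finset.range 3) ?_]
    · simp [Finset.sum_range_succ, ascPochhammer_succ_eval, hP, hA', hB']
      field_simp
      ring
    · intro n hn
      obtain ⟨m, rfl⟩ := Nat.exists_eq_add_of_le (show 3 ≤ n by simpa using hn)
      rw [show 3 + m = 2 + 1 + m by omega, show (1:ℝ) - 3 = -((2:ℕ):ℝ) by norm_num, poch_neg]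
      simp
end

section
/- Let a be a real number with either 1 < a < 4 or -3 < a < 0. Then the function g(c) = Γ(c)Γ(c-4)/(Γ(c-a)Γ(c+a-1)) is strictly decreasing in c on the interval (4, ∞). -/
open Real Set

/-- Nonstrict monotonicity of `x ↦ log Γ (x+s) - log Γ x` for `s ≥ 0`. -/
lemma logGamma_shift_mono {x y s : ℝ} (hx : 0 < x) (hxy : x < y) (hs : 0 ≤ s) :
    log (Gamma (x + s)) + log (Gamma y) ≤ log (Gamma x) + log (Gamma (y + s)) := by
  rcases eq_or_lt_of_le hs with rfl | hs
  · simp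
  have hc := Real.convexOn_log_Gamma
  have hy : 0 < y := hx.trans hxy
  have hxs : (0:ℝ) < x + s := by linarith
  have hys : (0:ℝ) < y + s := by linarith
  have h1 : ((log ∘ Gamma) y - (log ∘ Gamma) x) / (y - x)
      ≤ ((log ∘ Gamma) (y + s) - (log ∘ Gamma) x) / (y + s - x) :=
    hc.secant_mono_aux2 (by exact hx) (by exact hys) hxy (by linarith)
  have h2 : ((log ∘ Gamma) (y + s) - (log ∘ Gamma) x) / (y + s - x)
      ≤ ((log ∘ Gamma) (y + s) - (log ∘ Gamma) (x + s)) / (y + s - (x + s)) :=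
    hc.secant_mono_aux3 (by exact hx) (by exact hys) (by linarith) (by linarith)
  have h3 := h1.trans h2
  have hd : (0:ℝ) < y - x := by linarith
  rw [div_le_div_iff₀ hd (by linarith : (0:ℝ) < y + s - (x + s))] at h3
  simp only [Function.comp] at h3
  nlinarith [h3]

/-- `log Γ (t+1) = log t + log Γ t` for `t > 0`. -/
lemma logGamma_add_one {t : ℝ} (ht : 0 < t) :
    log (Gamma (t + 1)) = log t + log (Gamma t) := by
  rw [Real.Gamma_add_one ht.ne', Real.log_mul ht.ne' (Real.Gamma_pos_of_pos ht).ne']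

/-- Strict monotonicity of `x ↦ log Γ (x+s) - log Γ x` for `s ≥ 1`. -/
lemma logGamma_shift_strictMono {x y s : ℝ} (hx : 0 < x) (hxy : x < y) (hs : 1 ≤ s) :
    log (Gamma (x + s)) + log (Gamma y) < log (Gamma x) + log (Gamma (y + s)) := by
  have hy : 0 < y := hx.trans hxy
  have h1 := logGamma_add_one hx
  have h2 := logGamma_add_one hy
  have hlog : log x < log y := Real.log_lt_log hx hxy
  have h3 : log (Gamma (x + 1 + (s - 1))) + log (Gamma (y + 1))
      ≤ log (Gamma (x + 1)) + log (Gamma (y + 1 + (s - 1))) :=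
    logGamma_shift_mono (by linarith) (by linarith) (by linarith)
  rw [show x + 1 + (s - 1) = x + s by ring, show y + 1 + (s - 1) = y + s by ring] at h3
  linarith

/-- For `1 < a < 4` or `-3 < a < 0`, the quotient `Γ(c)Γ(c-4)/(Γ(c-a)Γ(c+a-1))` is
strictly decreasing in `c` on `(4, ∞)`. -/
theorem gamma_quotient_strictAntiOn (a : ℝ)
    (ha : (1 < a ∧ a < 4) ∨ (-3 < a ∧ a < 0)) :
    StrictAntiOn
      (fun c => Gamma c * Gamma (c - 4) / (Gamma (c - a) * Gamma (c + a - 1)))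
      (Ioi (4 : ℝ)) := by
  intro x hx y hy hxy
  simp only [mem_Ioi] at hx hy
  -- positivity of all Gamma arguments
  have hbound : (1 < a ∧ a < 4) ∨ (-3 < a ∧ a < 0) := ha
  have ha4 : a < 4 := by rcases ha with ⟨_, h⟩ | ⟨_, h⟩ <;> linarith
  have ha3 : -3 < a := by rcases ha with ⟨h, _⟩ | ⟨h, _⟩ <;> linarith
  have key : ∀ c : ℝ, 4 < c →
      Gamma c * Gamma (c - 4) / (Gamma (c - a) * Gamma (c + a - 1))
        = Real.exp (log (Gamma c) + log (Gamma (c - 4))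
            - (log (Gamma (c - a)) + log (Gamma (c + a - 1)))) := by
    intro c hc
    have p1 : 0 < Gamma c := Real.Gamma_pos_of_pos (by linarith)
    have p2 : 0 < Gamma (c - 4) := Real.Gamma_pos_of_pos (by linarith)
    have p3 : 0 < Gamma (c - a) := Real.Gamma_pos_of_pos (by linarith)
    have p4 : 0 < Gamma (c + a - 1) := Real.Gamma_pos_of_pos (by linarith)
    rw [Real.exp_sub, Real.exp_add, Real.exp_add, Real.exp_log p1, Real.exp_log p2,
      Real.exp_log p3, Real.exp_log p4]
  simp only [key x hx, key y hy]
  rw [Real.exp_lt_exp]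
  -- it suffices to compare the log expressions
  rcases ha with ⟨ha1, ha2⟩ | ⟨ha1, ha2⟩
  · -- case 1 < a < 4, shifts a-1 and 4-a
    rcases le_or_gt 2 a with h2 | h2
    · -- a - 1 ≥ 1 : strict on pair (c, c+a-1); nonstrict on (c-4, c-a)
      have H1 : log (Gamma (x + (a - 1))) + log (Gamma y)
          < log (Gamma x) + log (Gamma (y + (a - 1))) :=
        logGamma_shift_strictMono (by linarith) hxy (by linarith)
      have H2 : log (Gamma (x - 4 + (4 - a))) + log (Gamma (y - 4))
          ≤ log (Gamma (x - 4)) + log (Gamma (y - 4 + (4 - a))) :=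
        logGamma_shift_mono (by linarith) (by linarith) (by linarith)
      rw [show x + (a - 1) = x + a - 1 by ring, show y + (a - 1) = y + a - 1 by ring] at H1
      rw [show x - 4 + (4 - a) = x - a by ring, show y - 4 + (4 - a) = y - a by ring] at H2
      linarith
    · -- 4 - a > 2 ≥ 1 : strict on pair (c-4, c-a); nonstrict on (c, c+a-1)
      have H1 : log (Gamma (x + (a - 1))) + log (Gamma y)
          ≤ log (Gamma x) + log (Gamma (y + (a - 1))) :=
        logGamma_shift_mono (by linarith) hxy (by linarith)
      have H2 : log (Gamma (x - 4 + (4 - a))) + log (Gamma (y - 4))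
          < log (Gamma (x - 4)) + log (Gamma (y - 4 + (4 - a))) :=
        logGamma_shift_strictMono (by linarith) (by linarith) (by linarith)
      rw [show x + (a - 1) = x + a - 1 by ring, show y + (a - 1) = y + a - 1 by ring] at H1
      rw [show x - 4 + (4 - a) = x - a by ring, show y - 4 + (4 - a) = y - a by ring] at H2
      linarith
  · -- case -3 < a < 0, shifts -a and a+3
    rcases le_or_gt a (-1) with h2 | h2
    · -- -a ≥ 1 : strict on pair (c, c-a); nonstrict on (c-4, c+a-1)
      have H1 : log (Gamma (x + -a)) + log (Gamma y)
          < log (Gamma x) + log (Gamma (y + -a)) :=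
        logGamma_shift_strictMono (by linarith) hxy (by linarith)
      have H2 : log (Gamma (x - 4 + (a + 3))) + log (Gamma (y - 4))
          ≤ log (Gamma (x - 4)) + log (Gamma (y - 4 + (a + 3))) :=
        logGamma_shift_mono (by linarith) (by linarith) (by linarith)
      rw [show x + -a = x - a by ring, show y + -a = y - a by ring] at H1
      rw [show x - 4 + (a + 3) = x + a - 1 by ring,
        show y - 4 + (a + 3) = y + a - 1 by ring] at H2
      linarith
    · -- a + 3 > 2 ≥ 1 : strict on pair (c-4, c+a-1); nonstrict on (c, c-a)
      have H1 : log (Gamma (x + -a)) + log (Gamma y)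
          ≤ log (Gamma x) + log (Gamma (y + -a)) :=
        logGamma_shift_mono (by linarith) hxy (by linarith)
      have H2 : log (Gamma (x - 4 + (a + 3))) + log (Gamma (y - 4))
          < log (Gamma (x - 4)) + log (Gamma (y - 4 + (a + 3))) :=
        logGamma_shift_strictMono (by linarith) (by linarith) (by linarith)
      rw [show x + -a = x - a by ring, show y + -a = y - a by ring] at H1
      rw [show x - 4 + (a + 3) = x + a - 1 by ring,
        show y - 4 + (a + 3) = y + a - 1 by ring] at H2
      linarith
end
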